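/- Let G = Γ𝒢 be the graph product of a family of nontrivial groups over a finite simple graph Γ with vertex set V, let A ⊆ V and let X ⊆ G_A be an arbitrary subset. Call a subgroup of G a Γ_A-parabolic subgroup if it has the form hG_Th⁻¹ with h ∈ G_A and T ⊆ A. Suppose P is a least element (with respect to inclusion) of the set of Γ_A-parabolic subgroups containing X, and Q is a least element of the set of parabolic subgroups of G containing X. Then P = Q. -/

import Mathlib

variable {V : Type*} [Fintype V] (Γ : SimpleGraph V) (Gv : V → Type*) [∀ v, Group (Gv v)]

open scoped commutatorElement in
/-- The commutation relators defining the graph product. -/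
def graphProdRels : Set (Monoid.CoprodI Gv) :=
  {x | ∃ (u v : V) (g : Gv u) (h : Gv v), Γ.Adj u v ∧
        x = ⁅Monoid.CoprodI.of g, Monoid.CoprodI.of h⁆}

/-- The graph product of the family `Gv` over the graph `Γ`: the quotient of the free
product by the normal closure of the commutation relators. -/
def GraphProduct : Type _ :=
  Monoid.CoprodI Gv ⧸ Subgroup.normalClosure (graphProdRels Γ Gv)

instance : Group (GraphProduct Γ Gv) :=
  inferInstanceAs (Group (Monoid.CoprodI Gv ⧸ Subgroup.normalClosure (graphProdRels Γ Gv)))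

/-- The canonical homomorphism from a vertex group to the graph product. -/
def GraphProduct.of (v : V) : Gv v →* GraphProduct Γ Gv :=
  (QuotientGroup.mk' (Subgroup.normalClosure (graphProdRels Γ Gv))).comp Monoid.CoprodI.of

/-- The full subgroup generated by the vertex groups with vertices in `A`. -/
def fullSubgroup (A : Set V) : Subgroup (GraphProduct Γ Gv) :=
  Subgroup.closure (⋃ v ∈ A, Set.range (GraphProduct.of Γ Gv v))

/-- The conjugate `g H g⁻¹` of a subgroup. -/
def conjSubgroup {G : Type*} [Group G] (g : G) (H : Subgroup G) : Subgroup G :=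
  Subgroup.map (MulAut.conj g).toMonoidHom H

/-- Parabolic subgroups of the graph product: conjugates of full subgroups. -/
def IsParabolic (P : Subgroup (GraphProduct Γ Gv)) : Prop :=
  ∃ (A : Set V) (g : GraphProduct Γ Gv), P = conjSubgroup g (fullSubgroup Γ Gv A)

/-- The link of a set of vertices: vertices adjacent to every vertex of `A`. -/
def linkSet (A : Set V) : Set V := {u : V | ∀ a ∈ A, Γ.Adj u a}


/-- A Γ_A-parabolic subgroup: a conjugate, by an element of the full subgroup on A,
of a full subgroup on a subset T of A. -/
def IsSubParabolic (A : Set V) (P : Subgroup (GraphProduct Γ Gv)) : Prop :=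
  ∃ (T : Set V) (h : GraphProduct Γ Gv), T ⊆ A ∧ h ∈ fullSubgroup Γ Gv A ∧
    P = conjSubgroup h (fullSubgroup Γ Gv T)

/-
The retraction `ρ_A : G → G_A` that kills every vertex group off `A` fixes `G_A` pointwise
and sends a parabolic subgroup `g G_S g⁻¹` to the Γ_A-parabolic subgroup `ρ_A(g) G_{S∩A} ρ_A(g)⁻¹`.
Since `P` is in particular parabolic, `Q ≤ P ≤ G_A`; hence `ρ_A(Q) = Q` is a Γ_A-parabolic
subgroup containing `X`, so `P ≤ Q`.
-/

theorem conjSubgroup_map {G H : Type*} [Group G] [Group H] (f : G →* H) (g : G)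
    (K : Subgroup G) :
    (conjSubgroup g K).map f = conjSubgroup (f g) (K.map f) := by
  simp only [conjSubgroup, Subgroup.map_map]
  congr 1
  ext x
  simp

theorem conjSubgroup_le {G : Type*} [Group G] {g : G} {K L : Subgroup G}
    (hg : g ∈ L) (hK : K ≤ L) : conjSubgroup g K ≤ L := by
  rintro _ ⟨k, hk, rfl⟩
  exact mul_mem (mul_mem hg (hK hk)) (inv_mem hg)

theorem Subgroup.map_eq_self_of_forall_eq {G : Type*} [Group G] {f : G →* G} {K : Subgroup G}
    (hf : ∀ x ∈ K, f x = x) : K.map f = K := by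
  ext x
  refine ⟨?_, fun hx => ⟨x, hx, hf x hx⟩⟩
  rintro ⟨y, hy, rfl⟩
  rwa [hf y hy]

open GraphProduct

section

variable {V : Type*} (Γ : SimpleGraph V) (Gv : V → Type*) [∀ v, Group (Gv v)]

namespace GraphProduct

open scoped commutatorElement in
theorem of_commute {u v : V} (huv : Γ.Adj u v) (g : Gv u) (h : Gv v) :
    Commute (of Γ Gv u g) (of Γ Gv v h) := by
  rw [← commutatorElement_eq_one_iff_commute]
  have hrel : QuotientGroup.mk' (Subgroup.normalClosure (graphProdRels Γ Gv))
      ⁅Monoid.CoprodI.of g, Monoid.CoprodI.of h⁆ = 1 :=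
    (QuotientGroup.eq_one_iff _).2 (Subgroup.subset_normalClosure ⟨u, v, g, h, huv, rfl⟩)
  rwa [map_commutatorElement] at hrel

variable {Γ Gv} in
def lift {H : Type*} [Group H] (φ : ∀ v, Gv v →* H)
    (hφ : ∀ u v, Γ.Adj u v → ∀ (g : Gv u) (h : Gv v), Commute (φ u g) (φ v h)) :
    GraphProduct Γ Gv →* H :=
  QuotientGroup.lift _ (Monoid.CoprodI.lift φ) <| Subgroup.normalClosure_le_normal <| by
    rintro _ ⟨u, v, g, h, huv, rfl⟩
    rw [SetLike.mem_coe, MonoidHom.mem_ker, map_commutatorElement, Monoid.CoprodI.lift_of,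
      Monoid.CoprodI.lift_of, commutatorElement_eq_one_iff_commute]
    exact hφ u v huv g h

variable {Γ Gv} in
@[simp]
theorem lift_of {H : Type*} [Group H] (φ : ∀ v, Gv v →* H)
    (hφ : ∀ u v, Γ.Adj u v → ∀ (g : Gv u) (h : Gv v), Commute (φ u g) (φ v h))
    (v : V) (g : Gv v) : lift φ hφ (of Γ Gv v g) = φ v g :=
  Monoid.CoprodI.lift_of φ g

open Classical in
noncomputable def retraction (A : Set V) : GraphProduct Γ Gv →* GraphProduct Γ Gv :=
  lift (fun v => if v ∈ A then of Γ Gv v else 1) fun u v huv g h => by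
    by_cases hu : u ∈ A <;> by_cases hv : v ∈ A <;>
      simp [hu, hv, of_commute Γ Gv huv g h]

variable {Γ Gv}

theorem retraction_of_mem {A : Set V} {v : V} (hv : v ∈ A) (g : Gv v) :
    retraction Γ Gv A (of Γ Gv v g) = of Γ Gv v g := by
  simp [retraction, hv]

theorem retraction_of_notMem {A : Set V} {v : V} (hv : v ∉ A) (g : Gv v) :
    retraction Γ Gv A (of Γ Gv v g) = 1 := by
  simp [retraction, hv]

theorem of_mem_fullSubgroup {A : Set V} {v : V} (hv : v ∈ A) (g : Gv v) :
    of Γ Gv v g ∈ fullSubgroup Γ Gv A :=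
  Subgroup.subset_closure (Set.mem_biUnion hv ⟨g, rfl⟩)

theorem fullSubgroup_mono {A B : Set V} (h : A ⊆ B) :
    fullSubgroup Γ Gv A ≤ fullSubgroup Γ Gv B :=
  Subgroup.closure_mono (Set.biUnion_subset_biUnion_left h)

theorem fullSubgroup_univ : fullSubgroup Γ Gv Set.univ = ⊤ := by
  rw [eq_top_iff]
  rintro x -
  obtain ⟨y, rfl⟩ := QuotientGroup.mk'_surjective (Subgroup.normalClosure (graphProdRels Γ Gv)) x
  induction y using Monoid.CoprodI.induction_on with
  | one => exact one_mem _
  | of v g => exact of_mem_fullSubgroup (Set.mem_univ v) g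
  | mul y z hy hz => rw [map_mul]; exact mul_mem hy hz

theorem retraction_eq_self {A : Set V} {x : GraphProduct Γ Gv} (hx : x ∈ fullSubgroup Γ Gv A) :
    retraction Γ Gv A x = x := by
  refine MonoidHom.eqOn_closure (g := MonoidHom.id _) ?_ hx
  rintro _ hy
  obtain ⟨v, hv, g, rfl⟩ := Set.mem_iUnion₂.1 hy
  exact retraction_of_mem hv g

theorem map_retraction_fullSubgroup (A S : Set V) :
    (fullSubgroup Γ Gv S).map (retraction Γ Gv A) = fullSubgroup Γ Gv (S ∩ A) := by
  rw [fullSubgroup, MonoidHom.map_closure]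
  apply le_antisymm
  · rw [Subgroup.closure_le]
    rintro _ ⟨_, hy, rfl⟩
    obtain ⟨v, hvS, g, rfl⟩ := Set.mem_iUnion₂.1 hy
    by_cases hvA : v ∈ A
    · rw [retraction_of_mem hvA]
      exact of_mem_fullSubgroup (Set.mem_inter hvS hvA) g
    · rw [retraction_of_notMem hvA]
      exact one_mem _
  · refine Subgroup.closure_mono fun _ hy => ?_
    obtain ⟨v, ⟨hvS, hvA⟩, g, rfl⟩ := Set.mem_iUnion₂.1 hy
    exact ⟨of Γ Gv v g, Set.mem_biUnion hvS ⟨g, rfl⟩, retraction_of_mem hvA g⟩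

theorem retraction_mem_fullSubgroup (A : Set V) (x : GraphProduct Γ Gv) :
    retraction Γ Gv A x ∈ fullSubgroup Γ Gv A := by
  have hx : retraction Γ Gv A x ∈ (fullSubgroup Γ Gv Set.univ).map (retraction Γ Gv A) :=
    Subgroup.mem_map_of_mem _ (by rw [fullSubgroup_univ]; trivial)
  rwa [map_retraction_fullSubgroup, Set.univ_inter] at hx

end GraphProduct

variable {Γ Gv}

theorem IsSubParabolic.isParabolic {A : Set V} {P : Subgroup (GraphProduct Γ Gv)}
    (hP : IsSubParabolic Γ Gv A P) : IsParabolic Γ Gv P :=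
  let ⟨T, h, _, _, hPeq⟩ := hP
  ⟨T, h, hPeq⟩

theorem IsSubParabolic.le_fullSubgroup {A : Set V} {P : Subgroup (GraphProduct Γ Gv)}
    (hP : IsSubParabolic Γ Gv A P) : P ≤ fullSubgroup Γ Gv A := by
  obtain ⟨T, h, hTA, hhA, rfl⟩ := hP
  exact conjSubgroup_le hhA (fullSubgroup_mono hTA)

theorem IsParabolic.isSubParabolic_map_retraction {Q : Subgroup (GraphProduct Γ Gv)}
    (hQ : IsParabolic Γ Gv Q) (A : Set V) :
    IsSubParabolic Γ Gv A (Q.map (retraction Γ Gv A)) := by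
  obtain ⟨S, g, rfl⟩ := hQ
  refine ⟨S ∩ A, retraction Γ Gv A g, Set.inter_subset_right,
    retraction_mem_fullSubgroup A g, ?_⟩
  rw [conjSubgroup_map, map_retraction_fullSubgroup]

end

theorem stmt_14
    (A : Set V) (X : Set (GraphProduct Γ Gv))
    (hXA : X ⊆ (fullSubgroup Γ Gv A : Set (GraphProduct Γ Gv)))
    (P Q : Subgroup (GraphProduct Γ Gv))
    (hPpar : IsSubParabolic Γ Gv A P) (hXP : X ⊆ (P : Set (GraphProduct Γ Gv)))
    (hPmin : ∀ P', IsSubParabolic Γ Gv A P' → X ⊆ (P' : Set (GraphProduct Γ Gv)) → P ≤ P')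
    (hQpar : IsParabolic Γ Gv Q) (hXQ : X ⊆ (Q : Set (GraphProduct Γ Gv)))
    (hQmin : ∀ Q', IsParabolic Γ Gv Q' → X ⊆ (Q' : Set (GraphProduct Γ Gv)) → Q ≤ Q') :
    P = Q := by
  have hQP : Q ≤ P := hQmin P hPpar.isParabolic hXP
  have hQA : Q ≤ fullSubgroup Γ Gv A := hQP.trans hPpar.le_fullSubgroup
  have hPQ : P ≤ Q.map (retraction Γ Gv A) :=
    hPmin _ (hQpar.isSubParabolic_map_retraction A) fun x hx =>
      ⟨x, hXQ hx, retraction_eq_self (hXA hx)⟩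
  rw [Subgroup.map_eq_self_of_forall_eq fun x hx => retraction_eq_self (hQA hx)] at hPQ
  exact le_antisymm hPQ hQP
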